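/- arXiv:2403.12280 — 4 statements merged into one kernel-verified Lean document; each statement's English description precedes it below -/
import Mathlib

section
/- Let Z ⊆ ℝ² be a zonotope with center c and generators g₁,…,gₘ (m ≥ 1), no two of which are scalar multiples of one another, each with nonnegative second coordinate, and sorted in ascending order of angle. Let C(i,j) = 1 if j ≥ i and −1 otherwise, and define vₖ = c + Σⱼ C(k,j)gⱼ, v_{m+k} = c − Σⱼ C(k,j)gⱼ for k = 1,…,m. Then no point vₖ ∈ V = {v₁,…,v_{2m}} is a convex combination of the other points of V; i.e., each vₖ is an extreme point (vertex) of Z = co(V). -/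
/-!
A point `c + ∑ⱼ sⱼ gⱼ` with signs `sⱼ = ±1` is the unique maximiser, among the points
`c + ∑ⱼ tⱼ gⱼ` with `tⱼ ∈ [-1, 1]`, of any linear functional `φ` with `sⱼ φ(gⱼ) > 0` for every
nonzero `gⱼ`, and a point on which `φ` strictly exceeds a set lies outside its convex hull.
Since the generators are sorted by angle, the cross product with `g_{i-1} + g_i` is positive
on `g_j` exactly for `j ≥ i`, which is the sign pattern of `v_{i+1}`; for `i = 0` the cross
product with `g_0 - g_{m-1}` is positive on every `g_j`. The second half of the vertices uses
the negated functionals.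
-/

/-- The zonotope with center `c` and generators `g`. -/
def zonotope {n : ℕ} {ι : Type} [Fintype ι] (c : EuclideanSpace ℝ (Fin n))
    (g : ι → EuclideanSpace ℝ (Fin n)) : Set (EuclideanSpace ℝ (Fin n)) :=
  {x | ∃ β : ι → ℝ, (∀ k, β k ∈ Set.Icc (-1 : ℝ) 1) ∧ x = c + ∑ k, β k • g k}

/-- The 2m candidate vertices `vₖ = c ± Σⱼ C(k,j) gⱼ` where `C(k,j) = 1` if `j ≥ k`
and `-1` otherwise. -/
noncomputable def vtx {n m : ℕ} (c : EuclideanSpace ℝ (Fin n))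
    (g : Fin m → EuclideanSpace ℝ (Fin n)) : Fin m ⊕ Fin m → EuclideanSpace ℝ (Fin n) :=
  Sum.elim (fun k => c + ∑ j, (if k ≤ j then (1 : ℝ) else -1) • g j)
    (fun k => c - ∑ j, (if k ≤ j then (1 : ℝ) else -1) • g j)

open Finset

section Convex

variable {E : Type*} [AddCommGroup E] [Module ℝ E]

lemma notMem_convexHull_of_forall_lt (φ : E →ₗ[ℝ] ℝ) {s : Set E} {x : E}
    (h : ∀ y ∈ s, φ y < φ x) : x ∉ convexHull ℝ s := fun hx =>
  lt_irrefl (φ x) (convexHull_min h (convex_halfSpace_lt φ.isLinear (φ x)) hx)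

lemma mul_lt_mul_of_ne_sign {s t x : ℝ} (hs : s = 1 ∨ s = -1) (ht : t ∈ Set.Icc (-1 : ℝ) 1)
    (hx : 0 < s * x) (hts : t ≠ s) : t * x < s * x := by
  obtain ⟨ht₁, ht₂⟩ := ht
  rcases hs with rfl | rfl
  · nlinarith [lt_of_le_of_ne ht₂ hts]
  · nlinarith [lt_of_le_of_ne' ht₁ hts]

lemma map_sum_smul_lt_of_ne {ι : Type*} [Fintype ι] (φ : E →ₗ[ℝ] ℝ) {g : ι → E}
    {s t : ι → ℝ} (hs : ∀ j, s j = 1 ∨ s j = -1) (ht : ∀ j, t j ∈ Set.Icc (-1 : ℝ) 1)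
    (hφ : ∀ j, g j ≠ 0 → 0 < s j * φ (g j)) (hne : ∑ j, t j • g j ≠ ∑ j, s j • g j) :
    φ (∑ j, t j • g j) < φ (∑ j, s j • g j) := by
  have hlt : ∀ j, t j • g j ≠ s j • g j → t j * φ (g j) < s j * φ (g j) := fun j hj =>
    mul_lt_mul_of_ne_sign (hs j) (ht j) (hφ j fun h => hj (by simp [h]))
      fun h => hj (by rw [h])
  have hle : ∀ j, t j * φ (g j) ≤ s j * φ (g j) := fun j => by
    by_cases hj : t j • g j = s j • g j
    · simpa only [map_smul, smul_eq_mul] using (congrArg φ hj).le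
    · exact (hlt j hj).le
  obtain ⟨j, hj⟩ : ∃ j, t j • g j ≠ s j • g j := by
    by_contra! h
    exact hne (sum_congr rfl fun j _ => h j)
  simp only [map_sum, map_smul, smul_eq_mul]
  exact sum_lt_sum (fun j _ => hle j) ⟨j, mem_univ j, hlt j hj⟩

end Convex

section Vertices

def vtxSign {m : ℕ} (k : Fin m ⊕ Fin m) (j : Fin m) : ℝ :=
  Sum.elim (fun i => if i ≤ j then 1 else -1) (fun i => -(if i ≤ j then 1 else -1)) k

lemma vtxSign_eq_one_or_neg_one {m : ℕ} (k : Fin m ⊕ Fin m) (j : Fin m) :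
    vtxSign k j = 1 ∨ vtxSign k j = -1 := by
  rcases k with i | i <;> by_cases h : i ≤ j <;> simp [vtxSign, h]

lemma vtx_eq_add_sum {n m : ℕ} (c : EuclideanSpace ℝ (Fin n))
    (g : Fin m → EuclideanSpace ℝ (Fin n)) (k : Fin m ⊕ Fin m) :
    vtx c g k = c + ∑ j, vtxSign k j • g j := by
  rcases k with i | i
  · rfl
  · simp only [vtx, vtxSign, Sum.elim_inr, neg_smul, sum_neg_distrib, sub_eq_add_neg]

lemma vtx_notMem_convexHull_of_forall_pos {n m : ℕ} (c : EuclideanSpace ℝ (Fin n))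
    (g : Fin m → EuclideanSpace ℝ (Fin n)) (k : Fin m ⊕ Fin m)
    (φ : EuclideanSpace ℝ (Fin n) →ₗ[ℝ] ℝ) (hφ : ∀ j, g j ≠ 0 → 0 < vtxSign k j * φ (g j)) :
    vtx c g k ∉ convexHull ℝ (Set.range (vtx c g) \ {vtx c g k}) := by
  refine notMem_convexHull_of_forall_lt φ ?_
  rintro _ ⟨⟨k', rfl⟩, hne⟩
  rw [vtx_eq_add_sum, vtx_eq_add_sum, map_add, map_add, add_lt_add_iff_left]
  refine map_sum_smul_lt_of_ne φ (vtxSign_eq_one_or_neg_one k) (fun j => ?_) hφ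
    fun h => hne (by rw [vtx_eq_add_sum, vtx_eq_add_sum, h]; rfl)
  rcases vtxSign_eq_one_or_neg_one k' j with h | h <;> simp [h]

end Vertices

section Cross

local notation "ℝ²" => EuclideanSpace ℝ (Fin 2)

noncomputable def planarCross : ℝ² →ₗ[ℝ] ℝ² →ₗ[ℝ] ℝ :=
  LinearMap.mk₂ ℝ (fun u v => u 0 * v 1 - u 1 * v 0)
    (fun _ _ _ => by simp only [PiLp.add_apply]; ring)
    (fun _ _ _ => by simp only [PiLp.smul_apply, smul_eq_mul]; ring)
    (fun _ _ _ => by simp only [PiLp.add_apply]; ring)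
    (fun _ _ _ => by simp only [PiLp.smul_apply, smul_eq_mul]; ring)

lemma planarCross_apply (u v : ℝ²) : planarCross u v = u 0 * v 1 - u 1 * v 0 := rfl

lemma planarCross_self (u : ℝ²) : planarCross u u = 0 := by
  rw [planarCross_apply]; ring

lemma planarCross_swap (u v : ℝ²) : planarCross v u = -planarCross u v := by
  rw [planarCross_apply, planarCross_apply]; ring

variable {m : ℕ} {g : Fin m → ℝ²}
  (hsort : ∀ i j : Fin m, i < j → 0 < planarCross (g i) (g j))
include hsort

lemma planarCross_nonneg_of_le {i j : Fin m} (h : i ≤ j) : 0 ≤ planarCross (g i) (g j) := by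
  rcases h.lt_or_eq with h | rfl
  · exact (hsort i j h).le
  · rw [planarCross_self]

lemma planarCross_neg_of_lt {i j : Fin m} (h : j < i) : planarCross (g i) (g j) < 0 := by
  rw [planarCross_swap]; linarith [hsort j i h]

lemma planarCross_nonpos_of_le {i j : Fin m} (h : j ≤ i) : planarCross (g i) (g j) ≤ 0 := by
  rw [planarCross_swap]; linarith [planarCross_nonneg_of_le hsort h]

lemma exists_linearMap_sign_eq_of_sorted (i : Fin m) : ∃ φ : ℝ² →ₗ[ℝ] ℝ,
    ∀ j, g j ≠ 0 → 0 < (if i ≤ j then 1 else -1) * φ (g j) := by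
  by_cases hm : m = 1
  · refine ⟨innerₗ ℝ² (g i), fun j hj => ?_⟩
    obtain rfl : i = j := by omega
    simpa using real_inner_self_pos.mpr hj
  by_cases hi : i.val = 0
  · let last : Fin m := ⟨m - 1, by omega⟩
    refine ⟨planarCross (g i - g last), fun j _ => ?_⟩
    have h₀ : 0 ≤ planarCross (g i) (g j) :=
      planarCross_nonneg_of_le hsort (Fin.le_def.mpr (by omega))
    have h₁ : planarCross (g last) (g j) ≤ 0 :=
      planarCross_nonpos_of_le hsort (Fin.le_def.mpr (show j.val ≤ m - 1 by omega))
    rw [if_pos (Fin.le_def.mpr (by omega)), one_mul, map_sub, LinearMap.sub_apply]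
    by_cases hj : j.val = 0
    · have hij : i = j := Fin.ext (by omega)
      subst hij
      have hlast : i < last := Fin.lt_def.mpr (show i.val < m - 1 by omega)
      linarith [planarCross_neg_of_lt hsort hlast]
    · linarith [hsort i j (Fin.lt_def.mpr (by omega))]
  · let prev : Fin m := ⟨i.val - 1, by omega⟩
    have hprev : prev < i := Fin.lt_def.mpr (show i.val - 1 < i.val by omega)
    refine ⟨planarCross (g prev + g i), fun j _ => ?_⟩
    rw [map_add, LinearMap.add_apply]
    split_ifs with hij
    · linarith [hsort prev j (hprev.trans_le hij), planarCross_nonneg_of_le hsort hij]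
    · have hji : j ≤ prev := Fin.le_def.mpr <| show j.val ≤ i.val - 1 by
        rw [Fin.le_def] at hij; omega
      linarith [planarCross_nonpos_of_le hsort hji, planarCross_neg_of_lt hsort (not_le.mp hij)]

end Cross

theorem vtx_is_extreme_general {m : ℕ} (c : EuclideanSpace ℝ (Fin 2))
    (g : Fin m → EuclideanSpace ℝ (Fin 2))
    (hsort : ∀ i j : Fin m, i < j → 0 < g i 0 * g j 1 - g i 1 * g j 0) :
    ∀ k, vtx c g k ∉ convexHull ℝ (Set.range (vtx c g) \ {vtx c g k}) := by
  rintro (i | i) <;> obtain ⟨φ, hφ⟩ := exists_linearMap_sign_eq_of_sorted hsort i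
  · exact vtx_notMem_convexHull_of_forall_pos c g _ φ hφ
  · exact vtx_notMem_convexHull_of_forall_pos c g _ (-φ) fun j hj => by
      simpa [vtxSign] using hφ j hj

/-- For a planar zonotope whose generators all have nonnegative second coordinate, are
pairwise non-parallel, and are sorted in ascending order of angle (encoded by the cross
product `g i × g j > 0` for `i < j`), no point produced by the vertex enumeration
algorithm is a convex combination of the other points; i.e. each is a vertex of the
zonotope. -/
theorem vtx_is_extreme {m : ℕ} (hm : 1 ≤ m) (c : EuclideanSpace ℝ (Fin 2))
    (g : Fin m → EuclideanSpace ℝ (Fin 2))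
    (hy : ∀ k, 0 ≤ g k 1)
    (hsort : ∀ i j : Fin m, i < j → 0 < g i 0 * g j 1 - g i 1 * g j 0) :
    ∀ k, vtx c g k ∉ convexHull ℝ (Set.range (vtx c g) \ {vtx c g k}) :=
  vtx_is_extreme_general c g hsort
end

section
/- Let Z = ⟨c_z, G_z⟩ and O = ⟨c_o, G_o⟩ be zonotopes in ℝⁿ, and let O_z = ⟨c_o, [G_z, G_o]⟩ be the zonotope with center c_o and the concatenated generators of Z and O. Then Z ∩ O ≠ ∅ if and only if c_z ∈ O_z. -/
/-- Two zonotopes `Z = ⟨c_z, G_z⟩` and `O = ⟨c_o, G_o⟩` intersect if and only if the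
center `c_z` belongs to the buffered zonotope `O_z = ⟨c_o, [G_z, G_o]⟩`. -/
theorem zonotope_inter_iff_center_mem {n mz mo : ℕ}
    (cz co : EuclideanSpace ℝ (Fin n))
    (Gz : Fin mz → EuclideanSpace ℝ (Fin n)) (Go : Fin mo → EuclideanSpace ℝ (Fin n)) :
    (zonotope cz Gz ∩ zonotope co Go).Nonempty ↔ cz ∈ zonotope co (Sum.elim Gz Go) := by
  constructor
  · rintro ⟨x, ⟨βz, hβz, hxz⟩, ⟨βo, hβo, hxo⟩⟩
    refine ⟨Sum.elim (fun i => -βz i) βo, ?_, ?_⟩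
    · rintro (i | j)
      · have := hβz i
        simp only [Set.mem_Icc, Sum.elim_inl] at this ⊢
        constructor <;> linarith [this.1, this.2]
      · exact hβo j
    · have : cz = x - ∑ k, βz k • Gz k := by
        rw [hxz]; abel
      rw [this, hxo, Fintype.sum_sum_type]
      simp only [Sum.elim_inl, Sum.elim_inr, neg_smul, Finset.sum_neg_distrib]
      abel
  · rintro ⟨β, hβ, hcz⟩
    refine ⟨cz - ∑ i, β (Sum.inl i) • Gz i, ⟨fun i => -β (Sum.inl i), ?_, ?_⟩,
      ⟨fun j => β (Sum.inr j), fun j => hβ (Sum.inr j), ?_⟩⟩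
    · intro i
      have := hβ (Sum.inl i)
      simp only [Set.mem_Icc] at this ⊢
      constructor <;> linarith [this.1, this.2]
    · simp only [neg_smul, Finset.sum_neg_distrib]
      abel
    · rw [hcz, Fintype.sum_sum_type]
      simp only [Sum.elim_inl, Sum.elim_inr]
      abel
end

section
/- Let Z = ⟨c_z, G_z⟩ and O = ⟨c_o, G_o⟩ be zonotopes in ℝⁿ with Z ∩ O = ∅, and let O_z = ⟨c_o, [G_z, G_o]⟩. Then the distance between the sets Z and O equals the distance from the point c_z to the set O_z: inf_{x∈Z, y∈O} ‖x−y‖ = inf_{w∈O_z} ‖c_z − w‖. -/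
/-- If the zonotopes `Z = ⟨c_z, G_z⟩` and `O = ⟨c_o, G_o⟩` are disjoint, then the
distance between the sets `Z` and `O` equals the distance from the point `c_z` to the
buffered zonotope `O_z = ⟨c_o, [G_z, G_o]⟩`. -/
theorem zonotope_dist_eq_point_dist {n mz mo : ℕ}
    (cz co : EuclideanSpace ℝ (Fin n))
    (Gz : Fin mz → EuclideanSpace ℝ (Fin n)) (Go : Fin mo → EuclideanSpace ℝ (Fin n))
    (hdisj : Disjoint (zonotope cz Gz) (zonotope co Go)) :
    sInf (Set.image2 (fun x y => ‖x - y‖) (zonotope cz Gz) (zonotope co Go))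
      = sInf ((fun w => ‖cz - w‖) '' zonotope co (Sum.elim Gz Go)) := by
  congr 1
  ext d
  constructor
  · rintro ⟨x, ⟨β, hβ, rfl⟩, y, ⟨γ, hγ, rfl⟩, rfl⟩
    refine ⟨co + ∑ k, (Sum.elim (fun i => -β i) γ) k • Sum.elim Gz Go k,
      ⟨Sum.elim (fun i => -β i) γ, ?_, rfl⟩, ?_⟩
    · rintro (i | j)
      · simpa [neg_le, le_neg, and_comm] using hβ i
      · exact hγ j
    · simp only [Fintype.sum_sum_type, Sum.elim_inl, Sum.elim_inr]
      congr 1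
      simp only [neg_smul, Finset.sum_neg_distrib]
      abel
  · rintro ⟨w, ⟨δ, hδ, rfl⟩, rfl⟩
    refine ⟨cz + ∑ i, (-δ (Sum.inl i)) • Gz i, ⟨fun i => -δ (Sum.inl i), ?_, rfl⟩,
      co + ∑ j, δ (Sum.inr j) • Go j, ⟨fun j => δ (Sum.inr j), fun j => hδ _, rfl⟩, ?_⟩
    · intro i
      have h := hδ (Sum.inl i)
      simp only [Set.mem_Icc] at h ⊢
      constructor <;> linarith [h.1, h.2]
    · simp only [Fintype.sum_sum_type, Sum.elim_inl, Sum.elim_inr]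
      congr 1
      simp only [neg_smul, Finset.sum_neg_distrib]
      abel
end

section
/- The minimum of N ≥ 2 real numbers can be computed by a composition of pairwise-min gadgets arranged in a balanced binary tree of depth ⌈log₂ N⌉; since each pairwise min is a ReLU network of depth 2 and width 4 (by the two-layer ReLU identity for min), the N-ary minimum is exactly representable by a ReLU network of depth at most 2·⌈log₂ N⌉ and width at most 4·⌈N/2⌉. -/
/-- Coordinatewise ReLU. -/
noncomputable def reluVec {d : ℕ} (x : Fin d → ℝ) : Fin d → ℝ := fun i => max 0 (x i)

/-- A ReLU network with input dimension `n` and scalar output: an input affine layer,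
`depth` ReLU activations interleaved with affine layers of uniform `width`, and an
affine output layer.  `depth` counts the number of ReLU layers and `width` the maximal
number of neurons in a layer. -/
structure ReLUNet (n : ℕ) where
  depth : ℕ
  width : ℕ
  inW : Matrix (Fin width) (Fin n) ℝ
  inB : Fin width → ℝ
  midW : ℕ → Matrix (Fin width) (Fin width) ℝ
  midB : ℕ → Fin width → ℝ
  outW : Fin width → ℝ
  outB : ℝ

/-- The hidden state after `k+1` ReLU layers. -/
noncomputable def ReLUNet.hidden {n : ℕ} (net : ReLUNet n) (x : Fin n → ℝ) :
    ℕ → (Fin net.width → ℝ)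
  | 0 => reluVec (net.inW.mulVec x + net.inB)
  | k + 1 => reluVec ((net.midW k).mulVec (net.hidden x k) + net.midB k)

/-- The output of the network: the affine output layer applied after `depth` ReLU
layers. -/
noncomputable def ReLUNet.eval {n : ℕ} (net : ReLUNet n) (x : Fin n → ℝ) : ℝ :=
  dotProduct net.outW (net.hidden x (net.depth - 1)) + net.outB

/-!
Pair the inputs as `(x₀, x₁), (x₂, x₃), …` (clamping at the last index) and replace each pair by
its minimum; after `⌈log₂ N⌉` such rounds the first slot holds `min xᵢ`. Every slot always holds a
minimum of some inputs, so the surplus slots of later rounds are harmless. A round is one ReLU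
layer of four neurons per pair, by
`min a b = ½ReLU(a+b) − ½ReLU(a−b) − ½ReLU(−a+b) − ½ReLU(−a−b)`, and the linear read-out of a round
is absorbed into the affine map feeding the next one; hence depth `⌈log₂ N⌉` and width `4⌈N/2⌉`.
-/

namespace ReLUNet

open Matrix

variable {n : ℕ} (net : ReLUNet n) (x : Fin n → ℝ)

lemma hidden_zero_of_inB_eq_zero (h : net.inB = 0) : net.hidden x 0 = reluVec (net.inW *ᵥ x) := by
  rw [hidden, h, add_zero]

lemma hidden_succ_of_midB_eq_zero {k : ℕ} (h : net.midB k = 0) :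
    net.hidden x (k + 1) = reluVec (net.midW k *ᵥ net.hidden x k) := by
  rw [hidden, h, add_zero]

end ReLUNet

namespace MinTournament

section Tournament

variable {α : Type*} [LinearOrder α] {m n : ℕ}

def pairIdx [NeZero n] (p : Fin m) (s : Fin 2) : Fin n :=
  ⟨min (2 * p + s) (n - 1), by have := NeZero.pos n; omega⟩

def pairMin [NeZero n] (v : Fin n → α) (p : Fin m) : α :=
  min (v (pairIdx p 0)) (v (pairIdx p 1))

lemma pairMin_le [NeZero n] (v : Fin n → α) (p : Fin m) (j : Fin n) (hj : (j : ℕ) / 2 = p) :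
    pairMin v p ≤ v j := by
  have hjn := j.isLt
  rcases Nat.even_or_odd' j with ⟨q, hq | hq⟩
  · have : pairIdx (n := n) p 0 = j := Fin.ext (by simp [pairIdx]; omega)
    exact this ▸ min_le_left _ _
  · have : pairIdx (n := n) p 1 = j := Fin.ext (by simp [pairIdx]; omega)
    exact this ▸ min_le_right _ _

lemma le_pairMin [NeZero n] {v : Fin n → α} {c : α} (hc : ∀ i, c ≤ v i) (p : Fin m) :
    c ≤ pairMin v p :=
  le_min (hc _) (hc _)

def tournament [NeZero m] [NeZero n] (v : Fin n → α) : ℕ → Fin m → α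
  | 0 => pairMin v
  | k + 1 => pairMin (tournament v k)

variable [NeZero m] [NeZero n]

lemma tournament_le (v : Fin n → α) (hmn : n ≤ 2 * m) (k : ℕ) (i : Fin n) (p : Fin m)
    (hp : (p : ℕ) = i / 2 ^ (k + 1)) : tournament v k p ≤ v i := by
  induction k generalizing p with
  | zero => exact pairMin_le v p i (by simpa using hp.symm)
  | succ k ih =>
    have hlt : (i : ℕ) / 2 ^ (k + 1) < m :=
      calc (i : ℕ) / 2 ^ (k + 1)
          _ ≤ i / 2 := Nat.div_le_div_left (Nat.le_self_pow (by omega) 2) two_pos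
          _ < m := by omega
    refine (pairMin_le _ p ⟨_, hlt⟩ ?_).trans (ih _ rfl)
    rw [hp, Nat.div_div_eq_div_mul, ← pow_succ]

lemma inf'_le_tournament (v : Fin n → α) (k : ℕ) (p : Fin m) :
    Finset.univ.inf' Finset.univ_nonempty v ≤ tournament v k p := by
  induction k generalizing p with
  | zero => exact le_pairMin (fun i => Finset.inf'_le _ (Finset.mem_univ i)) p
  | succ k ih => exact le_pairMin ih p

theorem tournament_eq_inf' (v : Fin n → α) (hmn : n ≤ 2 * m) {k : ℕ} (hk : n ≤ 2 ^ (k + 1)) :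
    tournament v k (0 : Fin m) = Finset.univ.inf' Finset.univ_nonempty v := by
  refine le_antisymm ?_ (inf'_le_tournament v k 0)
  obtain ⟨i, -, hi⟩ := Finset.exists_mem_eq_inf' Finset.univ_nonempty v
  rw [hi]
  exact tournament_le v hmn k i 0 (by simp [Nat.div_eq_of_lt (i.isLt.trans_le hk)])

end Tournament

noncomputable section Gadget

open Matrix

lemma min_eq_relu_combination (a b : ℝ) :
    min a b = max 0 (a + b) / 2 - max 0 (a - b) / 2 - max 0 (-a + b) / 2 - max 0 (-a - b) / 2 := by
  rcases le_total a b with h | h <;> rcases le_total 0 (a + b) with h' | h' <;>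
    simp only [min_eq_left, min_eq_right, h, max_def] <;> split_ifs <;> linarith

def gadgetIn : Matrix (Fin 4) (Fin 2) ℝ := !![1, 1; 1, -1; -1, 1; -1, -1]

def gadgetOut : Fin 4 → ℝ := ![1 / 2, -1 / 2, -1 / 2, -1 / 2]

lemma gadgetOut_dotProduct_reluVec (u : Fin 2 → ℝ) :
    gadgetOut ⬝ᵥ reluVec (gadgetIn *ᵥ u) = min (u 0) (u 1) := by
  rw [min_eq_relu_combination]
  simp only [dotProduct, Fin.sum_univ_four, reluVec, mulVec, Fin.sum_univ_two, gadgetIn, gadgetOut,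
    of_apply, cons_val', cons_val_fin_one, cons_val_zero, cons_val_one, cons_val, one_mul, neg_mul,
    ← sub_eq_add_neg]
  ring

variable {m n : ℕ}

/-- Row `finProdFinEquiv (t, p)` of the hidden layer is neuron `t` of the gadget computing the
`p`-th pairwise minimum. -/
def gadgetLayer (src : Fin m → Fin 2 → Fin n) : Matrix (Fin (4 * m)) (Fin n) ℝ :=
  fun r i => ∑ s, gadgetIn (finProdFinEquiv.symm r).1 s *
    if src (finProdFinEquiv.symm r).2 s = i then 1 else 0

def readout : Matrix (Fin m) (Fin (4 * m)) ℝ :=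
  fun p r => if (finProdFinEquiv.symm r).2 = p then gadgetOut (finProdFinEquiv.symm r).1 else 0

lemma gadgetLayer_mulVec (src : Fin m → Fin 2 → Fin n) (v : Fin n → ℝ) (t : Fin 4) (p : Fin m) :
    (gadgetLayer src *ᵥ v) (finProdFinEquiv (t, p)) = (gadgetIn *ᵥ (v ∘ src p)) t := by
  simp [gadgetLayer, mulVec, dotProduct, add_mul, Finset.sum_add_distrib, ite_mul]

lemma readout_mulVec (h : Fin (4 * m) → ℝ) (p : Fin m) :
    (readout *ᵥ h) p = ∑ t, gadgetOut t * h (finProdFinEquiv (t, p)) := by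
  simp only [readout, mulVec, dotProduct]
  rw [← finProdFinEquiv.sum_comp]
  simp only [Equiv.symm_apply_apply, ite_mul, zero_mul, Fintype.sum_prod_type,
    Finset.sum_ite_eq', Finset.mem_univ, if_true]

lemma readout_mulVec_reluVec_gadgetLayer (src : Fin m → Fin 2 → Fin n) (v : Fin n → ℝ) :
    readout *ᵥ reluVec (gadgetLayer src *ᵥ v) = fun p => min (v (src p 0)) (v (src p 1)) := by
  ext p
  simp only [readout_mulVec, reluVec, gadgetLayer_mulVec]
  exact gadgetOut_dotProduct_reluVec (v ∘ src p)

end Gadget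

noncomputable section Network

open Matrix

-- The sizes are explicit because with them still unknown `*` resolves to `CStarMatrix`'s product.
def midLayer (m : ℕ) [NeZero m] : Matrix (Fin (4 * m)) (Fin (4 * m)) ℝ :=
  gadgetLayer (n := m) pairIdx * readout (m := m)

lemma readout_mulVec_reluVec_midLayer {m : ℕ} [NeZero m] (h : Fin (4 * m) → ℝ) :
    readout *ᵥ reluVec (midLayer m *ᵥ h) = pairMin (readout *ᵥ h) := by
  rw [midLayer, ← mulVec_mulVec]
  exact readout_mulVec_reluVec_gadgetLayer _ _

def minNet (m n K : ℕ) [NeZero m] [NeZero n] : ReLUNet n where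
  depth := K
  width := 4 * m
  inW := gadgetLayer pairIdx
  inB := 0
  midW _ := midLayer m
  midB _ := 0
  outW := readout 0
  outB := 0

variable {m n : ℕ} [NeZero m] [NeZero n]

lemma readout_mulVec_minNet_hidden (K : ℕ) (x : Fin n → ℝ) (k : ℕ) :
    readout *ᵥ (minNet m n K).hidden x k = tournament x k := by
  induction k with
  | zero =>
    rw [ReLUNet.hidden_zero_of_inB_eq_zero _ _ rfl]
    exact readout_mulVec_reluVec_gadgetLayer _ x
  | succ k ih =>
    rw [ReLUNet.hidden_succ_of_midB_eq_zero _ _ rfl]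
    exact (readout_mulVec_reluVec_midLayer _).trans (congrArg pairMin ih)

lemma minNet_eval (K : ℕ) (x : Fin n → ℝ) :
    (minNet m n K).eval x = tournament x (K - 1) (0 : Fin m) := by
  rw [← readout_mulVec_minNet_hidden K x]
  exact add_zero _

end Network

end MinTournament

open MinTournament in
/-- The minimum of `N ≥ 2` real numbers is exactly representable by a ReLU network of
depth at most `2⌈log₂ N⌉` and width at most `4⌈N/2⌉`. -/
theorem min_relu_network (N : ℕ) (hN : 2 ≤ N) :
    ∃ net : ReLUNet N,
      net.depth ≤ 2 * Nat.clog 2 N ∧ net.width ≤ 4 * ((N + 1) / 2) ∧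
      ∀ x : Fin N → ℝ,
        net.eval x = Finset.univ.inf' ⟨⟨0, by omega⟩, Finset.mem_univ _⟩ x := by
  have : NeZero N := ⟨by omega⟩
  have : NeZero ((N + 1) / 2) := ⟨by omega⟩
  have hK : N ≤ 2 ^ (Nat.clog 2 N - 1 + 1) := by
    rw [Nat.sub_add_cancel (Nat.clog_pos one_lt_two hN)]
    exact Nat.le_pow_clog one_lt_two N
  refine ⟨minNet ((N + 1) / 2) N (Nat.clog 2 N), Nat.le_mul_of_pos_left _ two_pos, le_rfl,
    fun x => ?_⟩
  rw [minNet_eval]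
  exact tournament_eq_inf' x (by omega) hK
end
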